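/- For every infinite cardinal κ, the ordinal τ_κ = sup{τ_G + 1 : G a centerless group of cardinality ≤ κ} satisfies τ_κ < (2^κ)⁺; that is, there is an ordinal below (2^κ)⁺ strictly bounding the stabilization ordinals of the automorphism towers of all centerless groups of cardinality at most κ. -/

import Mathlib

universe u

/-- The automorphism tower of a centerless group `G`: an ordinal-indexed increasing
continuous chain of groups, starting at `G`, where each successor stage is (identified
with) the automorphism group of the previous stage via the conjugation embedding. -/
structure AutTower (G : Type u) [Group G] where
  /-- the `o`-th stage `G^o` of the tower -/
  Stage : Ordinal.{u} → GrpCat.{u}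
  /-- the inclusion maps of the tower -/
  map : ∀ ⦃o₁ o₂ : Ordinal.{u}⦄, o₁ ≤ o₂ → (↥(Stage o₁) →* ↥(Stage o₂))
  map_id : ∀ (o : Ordinal.{u}) (x : ↥(Stage o)), map le_rfl x = x
  map_comp : ∀ ⦃o₁ o₂ o₃ : Ordinal.{u}⦄ (h₁ : o₁ ≤ o₂) (h₂ : o₂ ≤ o₃) (x : ↥(Stage o₁)),
      map h₂ (map h₁ x) = map (h₁.trans h₂) x
  map_injective : ∀ ⦃o₁ o₂ : Ordinal.{u}⦄ (h : o₁ ≤ o₂), Function.Injective (map h)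
  /-- the identification of `G` with the `0`-th stage -/
  emb0 : G ≃* ↥(Stage 0)
  /-- the identification of the `(o+1)`-st stage with `Aut(G^o)` -/
  succIso : ∀ o : Ordinal.{u}, ↥(Stage (o + 1)) ≃* MulAut ↥(Stage o)
  /-- under the above identification, the inclusion `G^o ≤ G^{o+1}` is `g ↦` conjugation by `g` -/
  succIso_map : ∀ (o : Ordinal.{u}) (x : ↥(Stage o)),
      succIso o (map (le_self_add : o ≤ o + 1) x) = MulAut.conj x
  /-- at limit stages the tower is continuous: `G^δ = ⋃_{α<δ} G^α` -/
  limit_covers : ∀ (o : Ordinal.{u}), Order.IsSuccLimit o → ∀ x : ↥(Stage o),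
      ∃ (o' : Ordinal.{u}) (h : o' < o), x ∈ Set.range (map h.le)

namespace AutTower

variable {G : Type u} [Group G]

/-- the embedding of `G` into the `o`-th stage of its automorphism tower -/
def embed (T : AutTower G) (o : Ordinal.{u}) : G →* ↥(T.Stage o) :=
  (T.map (zero_le : 0 ≤ o)).comp T.emb0.toMonoidHom

/-- `G^{o+1} = G^o`, i.e. the inclusion of stage `o` into stage `o+1` is onto -/
def StabilizesAt (T : AutTower G) (o : Ordinal.{u}) : Prop :=
  Function.Surjective (T.map (le_self_add : o ≤ o + 1))

end AutTower

/-!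
Thomas's argument. For centerless `G` the centralizer of `G` in every stage `G^α` of its tower is
trivial, so a homomorphism out of `G^α` is determined by its values on `G` (whenever the image of
`G` has trivial centralizer in the target). Hence `|G^α| ≤ 2^κ` for `α < λ := (2^κ)⁺`, and at most
`2^κ` elements of `G^λ` conjugate `G` into a given `G^β` (`β < λ`); they all lie in some `G^γ`,
`γ < λ`. If `δ < λ` has cofinality `κ⁺` and is closed under `β ↦ γ`, an element of `G^(δ+1)`
conjugates `G` into `G^δ`, hence (as `cf δ > |G|`) into some `G^β` with `β < δ`, so it lies in
`G^γ ⊆ G^δ`: the tower stabilizes at `δ`.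

The same rigidity makes any two towers of `G` isomorphic stagewise, so the stabilization points
depend only on the isomorphism type of `G`. Groups of size `≤ κ` have at most `2^κ` isomorphism
types (group structures on subsets of `κ`), and `λ` is regular.
-/

open Cardinal Ordinal Order Set

theorem Cardinal.two_power_power_le {κ μ : Cardinal.{u}} (hκ : ℵ₀ ≤ κ) (hμ : μ ≤ κ) :
    ((2 : Cardinal) ^ κ) ^ μ ≤ 2 ^ κ :=
  calc (2 ^ κ) ^ μ ≤ (2 ^ κ) ^ κ := power_le_power_left (power_ne_zero κ two_ne_zero) hμ
    _ = 2 ^ κ := by rw [← power_mul, mul_eq_self hκ]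

theorem Cardinal.mk_group_le {X : Type u} {κ : Cardinal.{u}} (hκ : ℵ₀ ≤ κ) (hX : #X ≤ κ) :
    #(Group X) ≤ 2 ^ κ :=
  calc #(Group X) ≤ #(X → X → X) := mk_le_of_injective fun _ _ h => Group.ext h
    _ = (#X ^ #X) ^ #X := by rw [power_def, power_def]
    _ ≤ ((2 ^ κ) ^ #X) ^ #X :=
      power_le_power_right (power_le_power_right (hX.trans (cantor κ).le))
    _ ≤ (2 ^ κ) ^ #X := power_le_power_right (two_power_power_le hκ hX)
    _ ≤ 2 ^ κ := two_power_power_le hκ hX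

theorem Cardinal.mk_sigma_set_group_le {K : Type u} {κ : Cardinal.{u}} (hκ : ℵ₀ ≤ κ)
    (hK : #K = κ) : #(Σ s : Set K, Group s) ≤ 2 ^ κ :=
  calc #(Σ s : Set K, Group s) ≤ sum fun _ : Set K => (2 : Cardinal) ^ κ := by
        rw [mk_sigma]
        exact sum_le_sum _ _ fun s => mk_group_le hκ ((mk_subtype_le _).trans hK.le)
    _ = 2 ^ κ := by rw [sum_const', mk_set, hK, mul_eq_self (hκ.trans (cantor κ).le)]

theorem exists_group_on_subset_mulEquiv {K G : Type u} [Group G] (hG : #G ≤ #K) :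
    ∃ (s : Set K) (_ : Group s), Nonempty (s ≃* G) := by
  obtain ⟨f⟩ := hG
  let e : Set.range f ≃ G := (Equiv.ofInjective f f.injective).symm
  exact ⟨_, e.group, ⟨e.mulEquiv⟩⟩

theorem Subgroup.center_eq_bot_of_mulEquiv {G H : Type*} [Group G] [Group H] (e : H ≃* G)
    (h : Subgroup.center G = ⊥) : Subgroup.center H = ⊥ := by
  have : Subsingleton (Subgroup.center G) := by rw [h]; infer_instance
  have := (Subgroup.centerCongr e).toEquiv.subsingleton
  exact Subgroup.eq_bot_of_subsingleton _

theorem Ordinal.exists_closure_point_cof_eq {c μ : Cardinal.{u}} (hc : c.IsRegular)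
    (hμ : μ.IsRegular) (hμc : μ < c) {P : Ordinal.{u} → Ordinal.{u} → Prop}
    (hP : ∀ β < c.ord, ∃ γ < c.ord, P β γ) :
    ∃ δ < c.ord, δ.cof = μ ∧ ∀ β < δ, ∃ γ < δ, P β γ := by
  choose! g hg_lt hgP using hP
  set F : Ordinal.{u} → Ordinal.{u} := fun γ => max γ (⨆ β : Iio γ, g β + 1)
  have hF_lt : ∀ γ < c.ord, F γ < c.ord := fun γ hγ => by
    refine max_lt hγ (lift_iSup_add_one_lt_of_lt_cof ?_ fun β => hg_lt β (β.2.trans hγ))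
    rw [← lift_cof, Cardinal.mk_Iio_ordinal, Cardinal.lift_lift, Cardinal.lift_lt, hc.cof_ord]
    exact lt_ord.mp hγ
  have hg_lt_F : ∀ γ, ∀ β < γ, g β < F γ := fun γ β hβ =>
    (lt_iSup_add_one (fun β : Iio γ => g β) ⟨β, hβ⟩).trans_le (le_max_right _ _)
  -- a strictly increasing `μ`-sequence whose terms bound `g` below all earlier terms
  set d : μ.ord.ToType → Ordinal.{u} :=
    WellFoundedLT.fix fun i d => F (⨆ j : Iio i, d j.1 j.2 + 1)
  have hd : ∀ i, d i = F (⨆ j : Iio i, d j + 1) := WellFoundedLT.fix_eq _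
  have hd_mono : StrictMono d := fun j i hji => by
    rw [hd i]
    exact (lt_iSup_add_one (fun j : Iio i => d j) ⟨j, hji⟩).trans_le (le_max_left _ _)
  have hd_lt : ∀ i, d i < c.ord := fun i => by
    induction i using WellFoundedLT.induction with
    | _ i ih =>
      rw [hd i]
      refine hF_lt _ (iSup_add_one_lt_of_lt_cof ?_ fun j => ih j j.2)
      rw [hc.cof_ord]
      exact (mk_Iio_lt i (by simp)).trans_eq (mk_ord_toType μ) |>.trans hμc
  have hδ : ⨆ i, d i < c.ord := iSup_lt_of_lt_cof (by rwa [hc.cof_ord, mk_ord_toType]) hd_lt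
  have : NoMaxOrder μ.ord.ToType := Cardinal.noMaxOrder hμ.aleph0_le
  refine ⟨⨆ i, d i, hδ, by rw [cof_iSup hd_mono, cof_toType, hμ.cof_ord], fun β hβ => ?_⟩
  obtain ⟨i, hi⟩ := Ordinal.lt_iSup_iff.mp hβ
  obtain ⟨j, hij⟩ := exists_gt i
  have hgβ : g β < d j := by
    rw [hd j]
    exact hg_lt_F _ β (hi.trans (lt_iSup_add_one (fun k : Iio j => d k) ⟨i, hij⟩))
  exact ⟨g β, hgβ.trans_le (Ordinal.le_iSup d j), hgP β (hβ.trans hδ)⟩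

namespace AutTower

variable {G : Type u} [Group G] (T : AutTower G)

@[simp]
theorem map_embed {o₁ o₂ : Ordinal.{u}} (h : o₁ ≤ o₂) (g : G) :
    T.map h (T.embed o₁ g) = T.embed o₂ g := by
  simp [embed, map_comp]

theorem embed_zero (g : G) : T.embed 0 g = T.emb0 g := T.map_id 0 _

@[simp]
theorem succIso_embed (o : Ordinal.{u}) (g : G) :
    T.succIso o (T.embed (o + 1) g) = MulAut.conj (T.embed o g) := by
  rw [← T.map_embed le_self_add, succIso_map]

theorem map_succIso_apply (o : Ordinal.{u}) (x : T.Stage (o + 1)) (y : T.Stage o) :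
    T.map le_self_add (T.succIso o x y) = x * T.map le_self_add y * x⁻¹ := by
  apply (T.succIso o).injective
  ext z
  simp [T.succIso_map, MulAut.conj_apply, mul_assoc]

theorem hom_ext_of_centralizer_eq_bot {H : Type*} [Group H] {φ : G →* H}
    (hφ : Subgroup.centralizer (range φ) = ⊥) {o : Ordinal.{u}} {f₁ f₂ : T.Stage o →* H}
    (h₁ : f₁.comp (T.embed o) = φ) (h₂ : f₂.comp (T.embed o) = φ) : f₁ = f₂ := by
  induction o using Ordinal.limitRecOn with
  | zero =>
    ext x
    obtain ⟨g, rfl⟩ := T.emb0.surjective x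
    rw [← embed_zero, ← MonoidHom.comp_apply, h₁, ← MonoidHom.comp_apply, h₂]
  | add_one β ih =>
    have hmap : f₁.comp (T.map le_self_add) = f₂.comp (T.map le_self_add) :=
      ih (by ext; simp [← h₁]) (by ext; simp [← h₂])
    ext x
    suffices (f₂ x)⁻¹ * f₁ x = 1 by rwa [inv_mul_eq_one, eq_comm] at this
    rw [← Subgroup.mem_bot, ← hφ, Subgroup.mem_centralizer_iff]
    rintro _ ⟨g, rfl⟩
    -- `f₁ x` and `f₂ x` induce the same conjugation on the image of stage `β`
    have key := DFunLike.congr_fun hmap (T.succIso β x (T.embed β g))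
    simp only [MonoidHom.comp_apply, map_succIso_apply, map_mul, map_inv, map_embed] at key
    have e₁ : f₁ (T.embed (β + 1) g) = φ g := DFunLike.congr_fun h₁ g
    have e₂ : f₂ (T.embed (β + 1) g) = φ g := DFunLike.congr_fun h₂ g
    rw [e₁, e₂] at key
    calc φ g * ((f₂ x)⁻¹ * f₁ x) = (f₂ x)⁻¹ * (f₂ x * φ g * (f₂ x)⁻¹) * f₁ x := by group
      _ = (f₂ x)⁻¹ * f₁ x * φ g := by rw [← key]; group
  | limit o hlim ih =>
    ext x
    obtain ⟨β, hβ, y, rfl⟩ := T.limit_covers o hlim x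
    have := ih β hβ (f₁ := f₁.comp (T.map hβ.le)) (f₂ := f₂.comp (T.map hβ.le))
      (by ext; simp [← h₁]) (by ext; simp [← h₂])
    exact DFunLike.congr_fun this y

theorem mulAut_eq_one_of_forall_embed {o : Ordinal.{u}}
    (hC : Subgroup.centralizer (range (T.embed o)) = ⊥) {ψ : MulAut (T.Stage o)}
    (hψ : ∀ g, ψ (T.embed o g) = T.embed o g) : ψ = 1 := by
  have : ψ.toMonoidHom = MonoidHom.id _ :=
    T.hom_ext_of_centralizer_eq_bot hC (by ext; simp [hψ]) (by ext; simp)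
  ext x
  exact DFunLike.congr_fun this x

theorem centralizer_range_embed_eq_bot (hZ : Subgroup.center G = ⊥) (o : Ordinal.{u}) :
    Subgroup.centralizer (range (T.embed o)) = ⊥ := by
  rw [Subgroup.eq_bot_iff_forall]
  induction o using Ordinal.limitRecOn with
  | zero =>
    intro x hx
    obtain ⟨z, rfl⟩ := T.emb0.surjective x
    have hz : z ∈ Subgroup.center G := Subgroup.mem_center_iff.mpr fun g =>
      T.emb0.injective <| by
        simpa [embed_zero] using Subgroup.mem_centralizer_iff.mp hx _ ⟨g, rfl⟩
    rw [hZ, Subgroup.mem_bot] at hz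
    rw [hz, map_one]
  | add_one β ih =>
    intro x hx
    have hψ : T.succIso β x = 1 := by
      refine T.mulAut_eq_one_of_forall_embed ((Subgroup.eq_bot_iff_forall _).mpr ih) fun g => ?_
      apply T.map_injective le_self_add
      rw [map_succIso_apply, map_embed, ← Subgroup.mem_centralizer_iff.mp hx _ ⟨g, rfl⟩]
      group
    simpa using congrArg (T.succIso β).symm hψ
  | limit o hlim ih =>
    intro x hx
    obtain ⟨β, hβ, y, rfl⟩ := T.limit_covers o hlim x
    have hy : y = 1 := ih β hβ y <| Subgroup.mem_centralizer_iff.mpr fun _ ⟨g, hg⟩ =>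
      T.map_injective hβ.le <| by simpa [← hg] using Subgroup.mem_centralizer_iff.mp hx _ ⟨g, rfl⟩
    rw [hy, map_one]

theorem conj_embed_injective (hZ : Subgroup.center G = ⊥) (o : Ordinal.{u}) :
    Function.Injective fun (x : T.Stage o) (g : G) => x * T.embed o g * x⁻¹ := by
  intro x y hxy
  suffices y⁻¹ * x = 1 by rwa [inv_mul_eq_one, eq_comm] at this
  rw [← Subgroup.mem_bot, ← T.centralizer_range_embed_eq_bot hZ o, Subgroup.mem_centralizer_iff]
  rintro _ ⟨g, rfl⟩
  have := congrFun hxy g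
  simp only at this
  calc T.embed o g * (y⁻¹ * x) = y⁻¹ * (y * T.embed o g * y⁻¹) * x := by group
    _ = y⁻¹ * x * T.embed o g := by rw [← this]; group

theorem mk_stage_add_one_le (hZ : Subgroup.center G = ⊥) (β : Ordinal.{u}) :
    #(T.Stage (β + 1)) ≤ #(T.Stage β) ^ #G := by
  have hinj : Function.Injective fun (ψ : MulAut (T.Stage β)) (g : G) => ψ (T.embed β g) := by
    intro ψ₁ ψ₂ h
    have : ψ₂⁻¹ * ψ₁ = 1 := T.mulAut_eq_one_of_forall_embed
      (T.centralizer_range_embed_eq_bot hZ β) fun g => by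
        simp [MulAut.mul_apply, congrFun h g]
    rwa [inv_mul_eq_one, eq_comm] at this
  calc #(T.Stage (β + 1)) = #(MulAut (T.Stage β)) := mk_congr (T.succIso β).toEquiv
    _ ≤ #(G → T.Stage β) := mk_le_of_injective hinj
    _ = #(T.Stage β) ^ #G := (power_def _ _).symm

theorem mk_stage_le_of_isSuccLimit {o : Ordinal.{u}} (hlim : IsSuccLimit o) {c : Cardinal.{u}}
    (hc : ∀ β < o, #(T.Stage β) ≤ c) : #(T.Stage o) ≤ o.card * c := by
  let β : o.ToType → Iio o := fun i => ToType.mk.symm i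
  have hsurj : Function.Surjective
      fun p : (Σ i : o.ToType, T.Stage (β i)) => T.map (β p.1).2.le p.2 := by
    intro x
    obtain ⟨γ, hγ, y, rfl⟩ := T.limit_covers o hlim x
    obtain ⟨i, rfl⟩ : ∃ i, (β i : Ordinal) = γ := ⟨ToType.mk ⟨γ, hγ⟩, by simp [β]⟩
    exact ⟨⟨i, y⟩, rfl⟩
  calc #(T.Stage o) ≤ #(Σ i : o.ToType, T.Stage (β i)) := mk_le_of_surjective hsurj
    _ ≤ sum fun _ : o.ToType => c := by rw [mk_sigma]; exact sum_le_sum _ _ fun i => hc _ (β i).2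
    _ = o.card * c := by rw [sum_const', mk_toType]

theorem mk_stage_le_two_power (hZ : Subgroup.center G = ⊥) {κ : Cardinal.{u}} (hκ : ℵ₀ ≤ κ)
    (hG : #G ≤ κ) {o : Ordinal.{u}} (ho : o < (succ ((2 : Cardinal) ^ κ)).ord) :
    #(T.Stage o) ≤ 2 ^ κ := by
  induction o using Ordinal.limitRecOn with
  | zero => exact (mk_congr T.emb0.toEquiv).symm.le.trans (hG.trans (cantor κ).le)
  | add_one β ih =>
    calc #(T.Stage (β + 1)) ≤ #(T.Stage β) ^ #G := T.mk_stage_add_one_le hZ β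
      _ ≤ (2 ^ κ) ^ #G := power_le_power_right (ih ((lt_add_one β).trans ho))
      _ ≤ 2 ^ κ := two_power_power_le hκ hG
  | limit o hlim ih =>
    calc #(T.Stage o) ≤ o.card * 2 ^ κ :=
          T.mk_stage_le_of_isSuccLimit hlim fun β hβ => ih β hβ (hβ.trans ho)
      _ ≤ 2 ^ κ * 2 ^ κ := mul_le_mul_left (lt_succ_iff.mp (lt_ord.mp ho)) _
      _ = 2 ^ κ := mul_eq_self (hκ.trans (cantor κ).le)

def InStage {o : Ordinal.{u}} (x : T.Stage o) (β : Ordinal.{u}) : Prop :=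
  ∃ (h : β ≤ o) (y : T.Stage β), T.map h y = x

variable {T}

theorem InStage.mono {o β γ : Ordinal.{u}} {x : T.Stage o} (hx : T.InStage x β) (hβγ : β ≤ γ)
    (hγ : γ ≤ o) : T.InStage x γ := by
  obtain ⟨hβ, y, rfl⟩ := hx
  exact ⟨hγ, T.map hβγ y, T.map_comp _ _ _⟩

theorem InStage.map {o o' β : Ordinal.{u}} {x : T.Stage o} (hx : T.InStage x β) (h : o ≤ o') :
    T.InStage (T.map h x) β := by
  obtain ⟨hβ, y, rfl⟩ := hx
  exact ⟨hβ.trans h, y, (T.map_comp _ _ _).symm⟩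

theorem exists_inStage_of_isSuccLimit {o : Ordinal.{u}} (hlim : IsSuccLimit o) (x : T.Stage o) :
    ∃ β < o, T.InStage x β := by
  obtain ⟨β, hβ, y, hy⟩ := T.limit_covers o hlim x
  exact ⟨β, hβ, hβ.le, y, hy⟩

variable (T)

theorem exists_inStage_of_forall_conj_inStage (hZ : Subgroup.center G = ⊥) {κ : Cardinal.{u}}
    (hκ : ℵ₀ ≤ κ) (hG : #G ≤ κ) {β : Ordinal.{u}} (hβ : β < (succ ((2 : Cardinal) ^ κ)).ord) :
    ∃ γ < (succ ((2 : Cardinal) ^ κ)).ord, ∀ x : T.Stage (succ ((2 : Cardinal) ^ κ)).ord,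
      (∀ g, T.InStage (x * T.embed (succ ((2 : Cardinal) ^ κ)).ord g * x⁻¹) β) →
        T.InStage x γ := by
  set Λ := (succ ((2 : Cardinal) ^ κ)).ord
  have h2κ : ℵ₀ ≤ 2 ^ κ := hκ.trans (cantor κ).le
  let S := {x : T.Stage Λ // ∀ g, T.InStage (x * T.embed Λ g * x⁻¹) β}
  choose _ y hy using fun (x : S) g => x.2 g
  have hy_inj : Function.Injective y := fun x x' hxx' => Subtype.ext <|
    T.conj_embed_injective hZ Λ <| funext fun g => by
      simp only [← hy x g, ← hy x' g, hxx']
  have hS : #S < Λ.cof := by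
    rw [(isRegular_succ h2κ).cof_ord, lt_succ_iff]
    calc #S ≤ #(G → T.Stage β) := mk_le_of_injective hy_inj
      _ = #(T.Stage β) ^ #G := (power_def _ _).symm
      _ ≤ (2 ^ κ) ^ #G := power_le_power_right (T.mk_stage_le_two_power hZ hκ hG hβ)
      _ ≤ 2 ^ κ := two_power_power_le hκ hG
  choose γ hγ hxγ using fun x : S =>
    exists_inStage_of_isSuccLimit (isSuccLimit_ord (h2κ.trans (le_succ _))) x.1
  have hγS : ⨆ x, γ x < Λ := iSup_lt_of_lt_cof hS hγ
  exact ⟨⨆ x, γ x, hγS, fun x hx =>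
    (hxγ ⟨x, hx⟩).mono (Ordinal.le_iSup γ ⟨x, hx⟩) hγS.le⟩

theorem exists_stabilizesAt_lt (hZ : Subgroup.center G = ⊥) {κ : Cardinal.{u}} (hκ : ℵ₀ ≤ κ)
    (hG : #G ≤ κ) : ∃ α < (succ ((2 : Cardinal) ^ κ)).ord, T.StabilizesAt α := by
  set Λ := (succ ((2 : Cardinal) ^ κ)).ord
  obtain ⟨δ, hδΛ, hcof, hclosed⟩ := exists_closure_point_cof_eq
    (isRegular_succ (hκ.trans (cantor κ).le)) (isRegular_succ hκ) (succ_lt_succ (cantor κ))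
    fun β hβ => T.exists_inStage_of_forall_conj_inStage hZ hκ hG hβ
  have hlim : IsSuccLimit δ :=
    one_lt_cof_iff.mp (hcof ▸ one_lt_aleph0.trans_le (hκ.trans (le_succ κ)))
  have hδ₁ : δ + 1 ≤ Λ := add_one_le_of_lt hδΛ
  refine ⟨δ, hδΛ, fun x => ?_⟩
  choose β hβ hxβ using fun g =>
    exists_inStage_of_isSuccLimit hlim (T.succIso δ x (T.embed δ g))
  have hb : ⨆ g, β g < δ := iSup_lt_of_lt_cof (hcof ▸ hG.trans_lt (lt_succ κ)) hβ
  obtain ⟨γ, hγ, hxγ⟩ := hclosed _ hb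
  obtain ⟨hγΛ, y, hy⟩ := hxγ (T.map hδ₁ x) fun g => by
    have := ((hxβ g).map le_self_add).map hδ₁
    rw [map_succIso_apply, map_embed, map_mul, map_mul, map_inv, map_embed] at this
    exact this.mono (Ordinal.le_iSup β g) (hb.trans hδΛ).le
  refine ⟨T.map hγ.le y, T.map_injective hδ₁ ?_⟩
  rw [T.map_comp, T.map_comp, hy]

theorem exists_hom_of_isSuccLimit {H : Type*} [Group H] {o : Ordinal.{u}}
    (hlim : IsSuccLimit o) (f : ∀ β < o, T.Stage β →* H)
    (hf : ∀ β γ (hβγ : β ≤ γ) (hγ : γ < o),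
      (f γ hγ).comp (T.map hβγ) = f β (hβγ.trans_lt hγ)) :
    ∃ F : T.Stage o →* H, ∀ β (hβ : β < o), F.comp (T.map hβ.le) = f β hβ := by
  have hwd : ∀ β γ (hβ : β < o) (hγ : γ < o) (y : T.Stage β) (z : T.Stage γ),
      T.map hβ.le y = T.map hγ.le z → f β hβ y = f γ hγ z := by
    intro β γ hβ hγ y z hyz
    have hm : max β γ < o := max_lt hβ hγ
    have : T.map (le_max_left β γ) y = T.map (le_max_right β γ) z :=
      T.map_injective hm.le (by rw [T.map_comp, T.map_comp, hyz])
    rw [← hf β _ (le_max_left β γ) hm, ← hf γ _ (le_max_right β γ) hm]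
    exact congrArg (f _ hm) this
  choose β hβ _ y hy using fun x : T.Stage o => exists_inStage_of_isSuccLimit hlim x
  have hmap : ∀ γ (hγ : γ < o) (z : T.Stage γ), f _ (hβ (T.map hγ.le z)) (y _) = f γ hγ z :=
    fun γ hγ z => hwd _ _ _ _ _ _ (hy _)
  have hmul : ∀ x₁ x₂,
      f _ (hβ (x₁ * x₂)) (y _) = f _ (hβ x₁) (y x₁) * f _ (hβ x₂) (y x₂) := by
    intro x₁ x₂
    have hm : max (β x₁) (β x₂) < o := max_lt (hβ x₁) (hβ x₂)
    obtain ⟨γ, hγ, ⟨_, z₁, rfl⟩, ⟨_, z₂, rfl⟩⟩ : ∃ γ < o, T.InStage x₁ γ ∧ T.InStage x₂ γ :=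
      ⟨_, hm, InStage.mono ⟨_, y x₁, hy x₁⟩ (le_max_left _ _) hm.le,
        InStage.mono ⟨_, y x₂, hy x₂⟩ (le_max_right _ _) hm.le⟩
    rw [← map_mul, hmap γ hγ, hmap γ hγ, hmap γ hγ, map_mul]
  exact ⟨MonoidHom.mk' (fun x => f _ (hβ x) (y x)) hmul,
    fun γ hγ => MonoidHom.ext (hmap γ hγ)⟩

theorem comp_eq_id_of_comp_embed (hZ : Subgroup.center G = ⊥) {T T' : AutTower G}
    {o : Ordinal.{u}} {f : T.Stage o →* T'.Stage o} {f' : T'.Stage o →* T.Stage o}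
    (hf : f.comp (T.embed o) = T'.embed o) (hf' : f'.comp (T'.embed o) = T.embed o) :
    f'.comp f = MonoidHom.id _ :=
  T.hom_ext_of_centralizer_eq_bot (T.centralizer_range_embed_eq_bot hZ o)
    (by rw [MonoidHom.comp_assoc, hf, hf']) (MonoidHom.id_comp _)

theorem exists_hom_stage (hZ : Subgroup.center G = ⊥) (o : Ordinal.{u}) (T T' : AutTower G) :
    ∃ f : T.Stage o →* T'.Stage o, f.comp (T.embed o) = T'.embed o := by
  induction o using Ordinal.limitRecOn generalizing T T' with
  | zero =>
    refine ⟨T'.emb0.toMonoidHom.comp T.emb0.symm.toMonoidHom, ?_⟩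
    ext g
    simp [embed_zero]
  | add_one β ih =>
    obtain ⟨f, hf⟩ := ih T T'
    obtain ⟨f', hf'⟩ := ih T' T
    let e := f.toMulEquiv f' (comp_eq_id_of_comp_embed hZ hf hf')
      (comp_eq_id_of_comp_embed hZ hf' hf)
    have he : ∀ g, e (T.embed β g) = T'.embed β g := DFunLike.congr_fun hf
    refine ⟨((T.succIso β).trans ((MulAut.congr e).trans (T'.succIso β).symm)).toMonoidHom, ?_⟩
    ext g
    apply (T'.succIso β).injective
    ext z
    simp [he]
  | limit o hlim ih =>
    choose f hf using fun β (_ : β < o) => ih β ‹_› T T'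
    have hfg : ∀ β hβ g, f β hβ (T.embed β g) = T'.embed β g :=
      fun β hβ => DFunLike.congr_fun (hf β hβ)
    obtain ⟨F, hF⟩ := T.exists_hom_of_isSuccLimit hlim
      (fun β hβ => (T'.map hβ.le).comp (f β hβ)) fun β γ hβγ hγ =>
        T.hom_ext_of_centralizer_eq_bot (T'.centralizer_range_embed_eq_bot hZ o)
          (by ext g; simp [hfg]) (by ext g; simp [hfg])
    refine ⟨F, ?_⟩
    ext g
    rw [MonoidHom.comp_apply, ← T.map_embed hlim.bot_lt.le, ← MonoidHom.comp_apply F,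
      hF 0 hlim.bot_lt]
    simp [hfg]

theorem exists_mulEquiv_stage (hZ : Subgroup.center G = ⊥) (o : Ordinal.{u})
    (T T' : AutTower G) :
    ∃ e : T.Stage o ≃* T'.Stage o, e.toMonoidHom.comp (T.embed o) = T'.embed o := by
  obtain ⟨f, hf⟩ := exists_hom_stage hZ o T T'
  obtain ⟨f', hf'⟩ := exists_hom_stage hZ o T' T
  exact ⟨f.toMulEquiv f' (comp_eq_id_of_comp_embed hZ hf hf') (comp_eq_id_of_comp_embed hZ hf' hf),
    hf⟩

theorem StabilizesAt.of_autTower (hZ : Subgroup.center G = ⊥) {T T' : AutTower G}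
    {α : Ordinal.{u}} (h : T'.StabilizesAt α) : T.StabilizesAt α := by
  obtain ⟨e₀, he₀⟩ := exists_mulEquiv_stage hZ α T' T
  obtain ⟨e₁, he₁⟩ := exists_mulEquiv_stage hZ (α + 1) T' T
  have hcomm :
      e₁.toMonoidHom.comp (T'.map le_self_add) = (T.map le_self_add).comp e₀.toMonoidHom :=
    T'.hom_ext_of_centralizer_eq_bot (T.centralizer_range_embed_eq_bot hZ (α + 1))
      (by ext g; simpa using DFunLike.congr_fun he₁ g)
      (by ext g; simp [show e₀ (T'.embed α g) = T.embed α g from DFunLike.congr_fun he₀ g])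
  intro x
  obtain ⟨y, hy⟩ := h (e₁.symm x)
  refine ⟨e₀ y, ?_⟩
  simpa [hy] using (DFunLike.congr_fun hcomm y).symm

def ofMulEquiv {H : Type u} [Group H] (e : H ≃* G) (T : AutTower G) : AutTower H :=
  { T with emb0 := e.trans T.emb0 }

theorem stabilizesAt_ofMulEquiv {H : Type u} [Group H] (e : H ≃* G) (T : AutTower G)
    {α : Ordinal.{u}} : (T.ofMulEquiv e).StabilizesAt α ↔ T.StabilizesAt α :=
  Iff.rfl

end AutTower

/-- For every infinite cardinal `κ`, the ordinal
`τ_κ = sup {τ_G + 1 : G centerless of cardinality ≤ κ}` satisfies `τ_κ < (2^κ)⁺`: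
there is an ordinal `β` below `(2^κ)⁺` strictly bounding the stabilization ordinals
of the automorphism towers of all centerless groups of cardinality at most `κ`. -/
theorem tau_kappa_lt_succ_two_pow (κ : Cardinal.{u}) (hκ : Cardinal.aleph0 ≤ κ) :
    ∃ β : Ordinal.{u}, β < (Order.succ ((2 : Cardinal.{u}) ^ κ)).ord ∧
      ∀ (G : Type u) [Group G], Subgroup.center G = ⊥ → Cardinal.mk G ≤ κ →
        ∀ T : AutTower G, ∃ α : Ordinal.{u}, α < β ∧ T.StabilizesAt α := by
  set Λ := (succ ((2 : Cardinal) ^ κ)).ord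
  let S : (Σ s : Set κ.out, Group s) → Set Ordinal.{u} := fun i =>
    {α | ∃ T : @AutTower i.1 i.2, @AutTower.StabilizesAt _ i.2 T α}
  let ι := {i // ∃ α < Λ, α ∈ S i}
  let v : ι → Ordinal.{u} := fun i => sInf (S i.1)
  have hv : ∀ i, v i < Λ := fun ⟨_, _, hα, hS⟩ => (csInf_le' hS).trans_lt hα
  have hι : #ι < Λ.cof := by
    rw [(isRegular_succ (hκ.trans (cantor κ).le)).cof_ord, lt_succ_iff]
    exact (mk_subtype_le _).trans (mk_sigma_set_group_le hκ (mk_out κ))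
  refine ⟨⨆ i, v i + 1, iSup_add_one_lt_of_lt_cof hι hv, fun G _ hZ hG T => ?_⟩
  obtain ⟨s, _, ⟨e⟩⟩ := exists_group_on_subset_mulEquiv (hG.trans_eq (mk_out κ).symm)
  have hZs := Subgroup.center_eq_bot_of_mulEquiv e hZ
  obtain ⟨α, hα, hstab⟩ := (T.ofMulEquiv e).exists_stabilizesAt_lt hZs hκ
    ((mk_subtype_le _).trans (mk_out κ).le)
  let i : ι := ⟨⟨s, _⟩, α, hα, _, hstab⟩
  obtain ⟨T', hT'⟩ : v i ∈ _ := csInf_mem ⟨α, _, hstab⟩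
  exact ⟨v i, lt_iSup_add_one v i,
    (AutTower.stabilizesAt_ofMulEquiv e T).mp (hT'.of_autTower hZs)⟩
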